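/- arXiv:2307.11366 — 2 statements merged into one kernel-verified Lean document; each statement's English description precedes it below -/
import Mathlib

section
/- A zonotope generated by a finite set G of n pairwise non-collinear nonzero vectors admits exactly 2^n sets of generators, each obtained from G by negating a subset of its vectors, and all of these sets have cardinality n. -/
open Pointwise
open scoped Classical

noncomputable section

abbrev E3 := EuclideanSpace ℝ (Fin 3)

def IsPolytope {E : Type*} [NormedAddCommGroup E] [InnerProductSpace ℝ E] (P : Set E) : Prop :=
  ∃ S : Finset E, S.Nonempty ∧ P = convexHull ℝ (S : Set E)

def IsFace {E : Type*} [NormedAddCommGroup E] [InnerProductSpace ℝ E] (P F : Set E) : Prop :=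
  F.Nonempty ∧ IsExposed ℝ P F

def faceDim {E : Type*} [NormedAddCommGroup E] [InnerProductSpace ℝ E] (F : Set E) : ℕ :=
  Module.finrank ℝ (vectorSpan ℝ F)

def IsEdge (P e : Set E3) : Prop := IsFace P e ∧ faceDim e = 1

def IsFacet (P F : Set E3) : Prop := IsFace P F ∧ faceDim F = 2

def normalCone (P F : Set E3) : Set E3 :=
  {u | ∀ x ∈ P, ∀ y ∈ F, (inner ℝ u x : ℝ) ≤ (inner ℝ u y : ℝ)}

def aggCone (P : Set E3) (u : E3) : Set E3 :=
  ⋃ F ∈ {F : Set E3 | IsFace P F ∧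
      Module.finrank ℝ (Submodule.span ℝ (normalCone P F)) = 2 ∧
      normalCone P F ⊆ ((ℝ ∙ u)ᗮ : Set E3)},
    normalCone P F

def firstNonzeroPos (u : E3) : Prop := ∃ i : Fin 3, 0 < u i ∧ ∀ j < i, u j = 0

def IsEdgeDirection (P : Set E3) (u : E3) : Prop :=
  ‖u‖ = 1 ∧ firstNonzeroPos u ∧ ∃ e : Set E3, IsEdge P e ∧ vectorSpan ℝ e = ℝ ∙ u

def proj (H : Submodule ℝ E3) (x : E3) : E3 := (H.orthogonalProjectionOnto x : E3)

def IsPolygonWith (Q : Set E3) (k : ℕ) : Prop :=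
  IsPolytope Q ∧ Module.finrank ℝ (vectorSpan ℝ Q) = 2 ∧ (Set.extremePoints ℝ Q).ncard = k

def IsKEquiprojective (P : Set E3) (k : ℕ) : Prop :=
  ∀ H : Submodule ℝ E3, Module.finrank ℝ H = 2 →
    (∀ F : Set E3, IsFacet P F → ¬ (Hᗮ ≤ vectorSpan ℝ F)) →
    IsPolygonWith (proj H '' P) k

def IsEquiprojective (P : Set E3) : Prop := ∃ k, IsKEquiprojective P k

def mult (P : Set E3) (u : E3) : ℕ :=
  if aggCone P u = ((ℝ ∙ u)ᗮ : Set E3) then 2 else 1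

def kappa (P : Set E3) : ℕ := ∑ᶠ u ∈ {u : E3 | IsEdgeDirection P u}, mult P u

def PairwiseNoncollinear {E : Type*} [AddCommGroup E] [Module ℝ E] (G : Finset E) : Prop :=
  (∀ g ∈ G, g ≠ 0) ∧ ∀ g ∈ G, ∀ g' ∈ G, g ≠ g' → ∀ c : ℝ, g' ≠ c • g

def zonotope {E : Type*} [NormedAddCommGroup E] [InnerProductSpace ℝ E] (G : Finset E) : Set E :=
  ∑ g ∈ G, segment ℝ (0 : E) g

def IsGenSet {E : Type*} [NormedAddCommGroup E] [InnerProductSpace ℝ E]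
    (Z : Set E) (G : Finset E) : Prop :=
  PairwiseNoncollinear G ∧ ∃ v : E, Z = v +ᵥ zonotope G

/-!
The support function of `v + ∑ g ∈ G, [0, g]` in direction `u` is `⟪u, v⟫ + ∑ g ∈ G, max ⟪u, g⟫ 0`,
so the width function `u ↦ ∑ g ∈ G, |⟪u, g⟫|` depends only on the zonotope. At a point `u` of the
hyperplane `g⊥` lying on no hyperplane `h⊥` with `h ∈ G` not collinear with `g`, the slope of this
piecewise linear function in direction `w` jumps by `2 |⟪w, g⟫|`; comparing these jumps recovers
every generator up to sign. Conversely, negating the generators in `S` only translates the zonotope by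
`-∑ g ∈ S, g`.
-/

namespace PairwiseNoncollinear

variable {E : Type*} [AddCommGroup E] [Module ℝ E] {G : Finset E}

theorem ne_zero (hG : PairwiseNoncollinear G) {g : E} (hg : g ∈ G) : g ≠ 0 :=
  hG.1 g hg

theorem mono (hG : PairwiseNoncollinear G) {H : Finset E} (hHG : H ⊆ G) :
    PairwiseNoncollinear H :=
  ⟨fun g hg => hG.1 g (hHG hg), fun g hg g' hg' => hG.2 g (hHG hg) g' (hHG hg')⟩

theorem eq_of_mem_span_singleton (hG : PairwiseNoncollinear G) {x y g : E} (hx : x ∈ G)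
    (hy : y ∈ G) (hxg : x ∈ ℝ ∙ g) (hyg : y ∈ ℝ ∙ g) : x = y := by
  obtain ⟨a, rfl⟩ := Submodule.mem_span_singleton.1 hxg
  obtain ⟨b, rfl⟩ := Submodule.mem_span_singleton.1 hyg
  have ha : a ≠ 0 := by
    rintro rfl
    exact hG.ne_zero hx (zero_smul ℝ g)
  by_contra hne
  exact hG.2 _ hx _ hy hne (b / a) (by rw [smul_smul, div_mul_cancel₀ b ha])

theorem neg_notMem (hG : PairwiseNoncollinear G) {x : E} (hx : x ∈ G) : -x ∉ G := by
  intro hnx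
  have hneg : -x = x := hG.eq_of_mem_span_singleton hnx hx
    (Submodule.neg_mem _ (Submodule.mem_span_singleton_self x))
    (Submodule.mem_span_singleton_self x)
  have htwo : (2 : ℝ) • x = 0 := by
    rw [two_smul]
    nth_rewrite 1 [← hneg]
    exact neg_add_cancel x
  exact hG.ne_zero hx ((smul_eq_zero.1 htwo).resolve_left two_ne_zero)

theorem injOn_smul (hG : PairwiseNoncollinear G) {c : E → ℝ} (hc : ∀ g ∈ G, c g ≠ 0) :
    Set.InjOn (fun g => c g • g) G := by
  intro g hg h hh hgh
  refine hG.eq_of_mem_span_singleton hg hh (Submodule.mem_span_singleton_self g) ?_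
  have : h = (c h)⁻¹ • c g • g := by
    rw [show c g • g = c h • h from hgh, inv_smul_smul₀ (hc h hh)]
  rw [this, smul_smul]
  exact Submodule.smul_mem _ _ (Submodule.mem_span_singleton_self g)

theorem image_smul [DecidableEq E] (hG : PairwiseNoncollinear G) {c : E → ℝ}
    (hc : ∀ g ∈ G, c g ≠ 0) :
    PairwiseNoncollinear (G.image fun g => c g • g) := by
  refine ⟨?_, ?_⟩
  · simp only [Finset.mem_image]
    rintro _ ⟨g, hg, rfl⟩
    exact smul_ne_zero (hc g hg) (hG.ne_zero hg)
  · simp only [Finset.mem_image]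
    rintro _ ⟨g, hg, rfl⟩ _ ⟨h, hh, rfl⟩ hne k hk
    have hgh : g ≠ h := by rintro rfl; exact hne rfl
    refine hgh (hG.eq_of_mem_span_singleton hg hh (Submodule.mem_span_singleton_self g) ?_)
    have : h = ((c h)⁻¹ * k * c g) • g := by
      rw [← smul_smul, ← smul_smul, ← hk, inv_smul_smul₀ (hc h hh)]
    rw [this]
    exact Submodule.smul_mem _ _ (Submodule.mem_span_singleton_self g)

end PairwiseNoncollinear

section FlipSigns

variable {E : Type*} [AddCommGroup E] [Module ℝ E] [DecidableEq E] {G S : Finset E}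

def flipSigns (G S : Finset E) : Finset E :=
  (G \ S) ∪ S.image (fun g => -g)

theorem flipSigns_eq_image (hS : S ⊆ G) :
    flipSigns G S = G.image fun g => (if g ∈ S then -1 else 1 : ℝ) • g := by
  ext x
  simp only [flipSigns, Finset.mem_union, Finset.mem_sdiff, Finset.mem_image]
  constructor
  · rintro (⟨hxG, hxS⟩ | ⟨g, hgS, rfl⟩)
    · exact ⟨x, hxG, by simp [hxS]⟩
    · exact ⟨g, hS hgS, by simp [hgS]⟩
  · rintro ⟨g, hgG, rfl⟩
    by_cases hgS : g ∈ S
    · exact Or.inr ⟨g, hgS, by simp [hgS]⟩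
    · exact Or.inl ⟨by simpa [hgS] using hgG, by simp [hgS]⟩

theorem pairwiseNoncollinear_flipSigns (hG : PairwiseNoncollinear G) (hS : S ⊆ G) :
    PairwiseNoncollinear (flipSigns G S) :=
  flipSigns_eq_image hS ▸ hG.image_smul fun _ _ => by split_ifs <;> norm_num

theorem card_flipSigns (hG : PairwiseNoncollinear G) (hS : S ⊆ G) :
    (flipSigns G S).card = G.card := by
  rw [flipSigns_eq_image hS,
    Finset.card_image_of_injOn (hG.injOn_smul fun _ _ => by split_ifs <;> norm_num)]

theorem filter_neg_mem_flipSigns (hG : PairwiseNoncollinear G) (hS : S ⊆ G) :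
    G.filter (fun g => -g ∈ flipSigns G S) = S := by
  ext g
  simp only [flipSigns, Finset.mem_filter, Finset.mem_union, Finset.mem_sdiff, Finset.mem_image,
    neg_inj, exists_eq_right]
  constructor
  · rintro ⟨hgG, ⟨hngG, -⟩ | hgS⟩
    · exact absurd hngG (hG.neg_notMem hgG)
    · exact hgS
  · exact fun hgS => ⟨hS hgS, Or.inr hgS⟩

theorem injOn_flipSigns (hG : PairwiseNoncollinear G) :
    Set.InjOn (flipSigns G) G.powerset := by
  intro S hS T hT hST
  rw [← filter_neg_mem_flipSigns hG (Finset.mem_powerset.1 hS), hST,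
    filter_neg_mem_flipSigns hG (Finset.mem_powerset.1 hT)]

theorem eq_flipSigns_filter {G' : Finset E} (hG' : PairwiseNoncollinear G')
    (hGG' : ∀ g ∈ G, g ∈ G' ∨ -g ∈ G') (hG'G : ∀ g ∈ G', g ∈ G ∨ -g ∈ G) :
    G' = flipSigns G (G.filter fun g => -g ∈ G') := by
  ext x
  simp only [flipSigns, Finset.mem_union, Finset.mem_sdiff, Finset.mem_filter, Finset.mem_image]
  constructor
  · intro hx
    rcases hG'G x hx with hxG | hnxG
    · exact Or.inl ⟨hxG, fun h => hG'.neg_notMem hx h.2⟩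
    · exact Or.inr ⟨-x, ⟨hnxG, by rwa [neg_neg]⟩, neg_neg x⟩
  · rintro (⟨hxG, hx⟩ | ⟨g, ⟨-, hg⟩, rfl⟩)
    · exact (hGG' x hxG).resolve_right fun h => hx ⟨hxG, h⟩
    · exact hg

end FlipSigns

theorem Set.finsetSum_vadd_set {ι α : Type*} [AddCommMonoid α] (s : Finset ι) (a : ι → α)
    (A : ι → Set α) : ∑ i ∈ s, (a i +ᵥ A i) = (∑ i ∈ s, a i) +ᵥ ∑ i ∈ s, A i := by
  simp only [← Set.singleton_vadd, vadd_eq_add, Finset.sum_add_distrib, Set.finsetSum_singleton]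

theorem isLUB_finsetSum {ι α : Type*} [AddCommGroup α] [PartialOrder α] [IsOrderedAddMonoid α]
    (s : Finset ι) {A : ι → Set α} {a : ι → α} (h : ∀ i ∈ s, IsLUB (A i) (a i)) :
    IsLUB (∑ i ∈ s, A i) (∑ i ∈ s, a i) := by
  classical
  induction s using Finset.induction_on with
  | empty => exact isLUB_singleton
  | insert i s hi ih =>
    rw [Finset.sum_insert hi, Finset.sum_insert hi]
    exact (h i (Finset.mem_insert_self i s)).add
      (ih fun j hj => h j (Finset.mem_insert_of_mem hj))

section Zonotope

open scoped RealInnerProductSpace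

variable {E : Type*} [NormedAddCommGroup E] [InnerProductSpace ℝ E] {G S : Finset E}

theorem segment_zero_neg (g : E) : segment ℝ 0 (-g) = -g +ᵥ segment ℝ 0 g := by
  rw [vadd_segment, vadd_eq_add, vadd_eq_add, add_zero, neg_add_cancel, segment_symm]

theorem zonotope_flipSigns [DecidableEq E] (hG : PairwiseNoncollinear G) (hS : S ⊆ G) :
    zonotope (flipSigns G S) = (-∑ s ∈ S, s) +ᵥ zonotope G := by
  have hseg : ∀ g ∈ G, segment ℝ 0 ((if g ∈ S then -1 else 1 : ℝ) • g) =
      (if g ∈ S then -g else 0) +ᵥ segment ℝ 0 g := by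
    intro g _
    split_ifs <;> simp [segment_zero_neg]
  rw [zonotope, flipSigns_eq_image hS,
    Finset.sum_image (hG.injOn_smul fun _ _ => by split_ifs <;> norm_num),
    Finset.sum_congr rfl hseg, Set.finsetSum_vadd_set, Finset.sum_ite_mem,
    Finset.inter_eq_right.2 hS, Finset.sum_neg_distrib, zonotope]

theorem isGenSet_flipSigns [DecidableEq E] {Z : Set E} (hZ : IsGenSet Z G) (hS : S ⊆ G) :
    IsGenSet Z (flipSigns G S) := by
  obtain ⟨hG, v, rfl⟩ := hZ
  refine ⟨pairwiseNoncollinear_flipSigns hG hS, v + ∑ s ∈ S, s, ?_⟩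
  rw [zonotope_flipSigns hG hS, vadd_vadd, add_neg_cancel_right]

theorem isLUB_image_inner_vadd_zonotope (G : Finset E) (v u : E) :
    IsLUB ((fun x => ⟪u, x⟫) '' (v +ᵥ zonotope G)) (⟪u, v⟫ + ∑ g ∈ G, max ⟪u, g⟫ 0) := by
  have himage : (fun x => ⟪u, x⟫) '' (v +ᵥ zonotope G) =
      {⟪u, v⟫} + ∑ g ∈ G, segment ℝ 0 ⟪u, g⟫ := by
    have hseg : ∀ g, innerₗ E u '' segment ℝ 0 g = segment ℝ 0 ⟪u, g⟫ := fun g => by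
      simpa using image_segment ℝ (innerₗ E u).toAffineMap 0 g
    rw [zonotope, ← Set.singleton_vadd, vadd_eq_add]
    change innerₗ E u '' _ = _
    rw [Set.image_add, Set.image_singleton, Set.image_finsetSum]
    simp only [hseg, innerₗ_apply_apply]
  rw [himage]
  refine isLUB_singleton.add (isLUB_finsetSum G fun g _ => ?_)
  rw [segment_eq_uIcc, max_comm]
  exact isLUB_Icc inf_le_sup

theorem sum_abs_inner_eq_of_vadd_zonotope_eq {G' : Finset E} {v v' : E}
    (h : v +ᵥ zonotope G = v' +ᵥ zonotope G') (u : E) :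
    ∑ g ∈ G, |⟪u, g⟫| = ∑ g ∈ G', |⟪u, g⟫| := by
  have hsupp : ∀ u, ⟪u, v⟫ + ∑ g ∈ G, max ⟪u, g⟫ 0 = ⟪u, v'⟫ + ∑ g ∈ G', max ⟪u, g⟫ 0 :=
    fun u => (isLUB_image_inner_vadd_zonotope G v u).unique
      (h ▸ isLUB_image_inner_vadd_zonotope G' v' u)
  have hu := hsupp u
  have hnu := hsupp (-u)
  simp only [inner_neg_left] at hnu
  simp only [← max_zero_add_max_neg_zero_eq_abs_self, Finset.sum_add_distrib]
  linarith

end Zonotope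

section WidthFunction

open Filter Topology
open scoped RealInnerProductSpace

variable {E : Type*} [NormedAddCommGroup E] [InnerProductSpace ℝ E]

theorem abs_add_add_abs_sub_of_abs_le {a b : ℝ} (h : |b| ≤ |a|) :
    |a + b| + |a - b| = 2 * |a| := by
  obtain ⟨hlo, hhi⟩ := abs_le.1 h
  rcases le_total 0 a with ha | ha
  · rw [abs_of_nonneg ha] at hlo hhi ⊢
    rw [abs_of_nonneg (by linarith), abs_of_nonneg (by linarith)]
    ring
  · rw [abs_of_nonpos ha] at hlo hhi ⊢
    rw [abs_of_nonpos (by linarith), abs_of_nonpos (by linarith)]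
    ring

theorem eventually_abs_add_mul_add_abs_sub_mul (a b : ℝ) :
    ∀ᶠ t in 𝓝[>] (0 : ℝ),
      |a + t * b| + |a - t * b| = 2 * |a| + 2 * t * (if a = 0 then |b| else 0) := by
  by_cases ha : a = 0
  · filter_upwards [self_mem_nhdsWithin] with t (ht : 0 < t)
    simp only [ha, if_true, zero_add, zero_sub, abs_neg, abs_mul, abs_of_pos ht, abs_zero]
    ring
  · have hlim : Tendsto (fun t : ℝ => |t * b|) (𝓝 0) (𝓝 0) := by
      simpa using ((continuous_mul_const b).abs.tendsto 0)
    filter_upwards [nhdsWithin_le_nhds (hlim.eventually_lt_const (abs_pos.2 ha))] with t ht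
    rw [if_neg ha, mul_zero, add_zero]
    exact abs_add_add_abs_sub_of_abs_le ht.le

theorem eventually_sum_abs_inner_add_add_sum_abs_inner_sub (H : Finset E) (u w : E) :
    ∀ᶠ t in 𝓝[>] (0 : ℝ), ∑ h ∈ H, |⟪u + t • w, h⟫| + ∑ h ∈ H, |⟪u - t • w, h⟫| =
      2 * ∑ h ∈ H, |⟪u, h⟫| + 2 * t * ∑ h ∈ H with ⟪u, h⟫ = 0, |⟪w, h⟫| := by
  filter_upwards [(eventually_all_finset H).2 fun h _ =>
    eventually_abs_add_mul_add_abs_sub_mul ⟪u, h⟫ ⟪w, h⟫] with t ht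
  simp only [inner_add_left, inner_sub_left, real_inner_smul_left, ← Finset.sum_add_distrib,
    Finset.sum_filter, Finset.mul_sum]
  exact Finset.sum_congr rfl ht

theorem sum_filter_abs_inner_eq_of_sum_abs_inner_eq {G G' : Finset E}
    (h : ∀ u, ∑ g ∈ G, |⟪u, g⟫| = ∑ g ∈ G', |⟪u, g⟫|) (u w : E) :
    ∑ g ∈ G with ⟪u, g⟫ = 0, |⟪w, g⟫| = ∑ g ∈ G' with ⟪u, g⟫ = 0, |⟪w, g⟫| := by
  obtain ⟨t, (ht : 0 < t), hG, hG'⟩ := (eventually_mem_nhdsWithin.and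
    ((eventually_sum_abs_inner_add_add_sum_abs_inner_sub G u w).and
      (eventually_sum_abs_inner_add_add_sum_abs_inner_sub G' u w))).exists
  rw [h (u + t • w), h (u - t • w), h u, hG'] at hG
  exact mul_left_cancel₀ (by positivity : (2 : ℝ) * t ≠ 0) (by linarith)

theorem exists_inner_eq_zero_and_inner_ne_zero (g : E) (H : Finset E) :
    ∃ u : E, ⟪u, g⟫ = 0 ∧ ∀ h ∈ H, h ∉ ℝ ∙ g → ⟪u, h⟫ ≠ 0 := by
  set V := (ℝ ∙ g)ᗮ
  let p : H.filter (· ∉ ℝ ∙ g) → Subspace ℝ V := fun h => (ℝ ∙ (h : E))ᗮ.comap V.subtype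
  have hmem : ∀ (x : V) h, x ∈ p h ↔ ⟪(x : E), h⟫ = 0 := fun x h =>
    Submodule.mem_orthogonal_singleton_iff_inner_left
  have hp : ∀ h, p h ≠ ⊤ := by
    intro h htop
    have horth : (h : E) ∈ Vᗮ := by
      rw [Submodule.mem_orthogonal]
      exact fun x hx => (hmem ⟨x, hx⟩ h).1 (htop ▸ Submodule.mem_top)
    rw [Submodule.orthogonal_orthogonal] at horth
    exact (Finset.mem_filter.1 h.2).2 horth
  obtain ⟨x, hx⟩ : ∃ x : V, ∀ h, x ∉ p h := by
    by_contra! hcov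
    obtain ⟨h, hh⟩ := Subspace.exists_eq_top_of_iUnion_eq_univ (p := p)
      (Set.iUnion_eq_univ_iff.2 hcov)
    exact hp h hh
  refine ⟨x, Submodule.mem_orthogonal_singleton_iff_inner_left.1 x.2, fun h hH hg hxh => ?_⟩
  exact hx ⟨h, Finset.mem_filter.2 ⟨hH, hg⟩⟩ ((hmem x _).2 hxh)

end WidthFunction

section Recovery

open scoped RealInnerProductSpace

variable {E : Type*} [NormedAddCommGroup E] [InnerProductSpace ℝ E] {G G' : Finset E}

theorem mem_or_neg_mem_of_sum_abs_inner_eq_abs_inner {T : Finset E} {g : E}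
    (hT : PairwiseNoncollinear T) (hTg : ∀ h ∈ T, h ∈ ℝ ∙ g) (hg : g ≠ 0)
    (hsum : ∀ w, ∑ h ∈ T, |⟪w, h⟫| = |⟪w, g⟫|) : g ∈ T ∨ -g ∈ T := by
  have hgg : |⟪g, g⟫| ≠ 0 := by simpa using hg
  obtain ⟨h, hh⟩ : T.Nonempty := by
    rw [Finset.nonempty_iff_ne_empty]
    rintro rfl
    exact hgg (by simpa using (hsum g).symm)
  have hTh : T = {h} := Finset.eq_singleton_iff_unique_mem.2
    ⟨hh, fun x hx => hT.eq_of_mem_span_singleton hx hh (hTg x hx) (hTg h hh)⟩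
  obtain ⟨c, rfl⟩ := Submodule.mem_span_singleton.1 (hTg h hh)
  have hc : |c| = 1 := by
    have := hsum g
    rw [hTh, Finset.sum_singleton, real_inner_smul_right, abs_mul] at this
    exact (mul_eq_right₀ hgg).1 this
  rcases (abs_eq zero_le_one).1 hc with rfl | rfl
  · exact Or.inl (by simpa using hh)
  · exact Or.inr (by simpa using hh)

theorem PairwiseNoncollinear.mem_or_neg_mem_of_sum_abs_inner_eq (hG : PairwiseNoncollinear G)
    (hG' : PairwiseNoncollinear G') (hGG' : ∀ u, ∑ g ∈ G, |⟪u, g⟫| = ∑ g ∈ G', |⟪u, g⟫|)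
    {g : E} (hg : g ∈ G) : g ∈ G' ∨ -g ∈ G' := by
  obtain ⟨u, hug, hu⟩ := exists_inner_eq_zero_and_inner_ne_zero g (G ∪ G')
  have hspan : ∀ h ∈ G ∪ G', ⟪u, h⟫ = 0 → h ∈ ℝ ∙ g := fun h hh hz =>
    by_contra fun hn => hu h hh hn hz
  have hGu : G.filter (fun h => ⟪u, h⟫ = 0) = {g} := by
    refine Finset.eq_singleton_iff_unique_mem.2 ⟨Finset.mem_filter.2 ⟨hg, hug⟩, fun x hx => ?_⟩
    obtain ⟨hxG, hxu⟩ := Finset.mem_filter.1 hx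
    exact hG.eq_of_mem_span_singleton hxG hg (hspan x (Finset.mem_union_left _ hxG) hxu)
      (Submodule.mem_span_singleton_self g)
  have hG'u :=
    mem_or_neg_mem_of_sum_abs_inner_eq_abs_inner (T := G'.filter fun h => ⟪u, h⟫ = 0)
    (hG'.mono (Finset.filter_subset _ _))
    (fun h hh => hspan h (Finset.mem_union_right _ (Finset.mem_filter.1 hh).1)
      (Finset.mem_filter.1 hh).2)
    (hG.ne_zero hg)
    (fun w => by
      rw [← sum_filter_abs_inner_eq_of_sum_abs_inner_eq hGG' u w, hGu, Finset.sum_singleton])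
  exact hG'u.imp (fun h => (Finset.mem_filter.1 h).1) (fun h => (Finset.mem_filter.1 h).1)

theorem IsGenSet.eq_flipSigns [DecidableEq E] {Z : Set E} (hG : IsGenSet Z G)
    (hG' : IsGenSet Z G') :
    G' = flipSigns G (G.filter fun g => -g ∈ G') := by
  obtain ⟨hGnc, v, rfl⟩ := hG
  obtain ⟨hG'nc, v', hZ⟩ := hG'
  have hwidth := sum_abs_inner_eq_of_vadd_zonotope_eq hZ
  exact eq_flipSigns_filter hG'nc (fun _ => hGnc.mem_or_neg_mem_of_sum_abs_inner_eq hG'nc hwidth)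
    (fun _ => hG'nc.mem_or_neg_mem_of_sum_abs_inner_eq hGnc fun u => (hwidth u).symm)

theorem IsGenSet.setOf_isGenSet_eq_image_flipSigns [DecidableEq E] {Z : Set E} (hG : IsGenSet Z G) :
    {G' | IsGenSet Z G'} = G.powerset.image (flipSigns G) := by
  ext G'
  simp only [Set.mem_ofPred_eq, Finset.coe_image, Set.mem_image, Finset.mem_coe,
    Finset.mem_powerset]
  constructor
  · exact fun hG' => ⟨_, Finset.filter_subset _ _, (hG.eq_flipSigns hG').symm⟩
  · rintro ⟨S, hS, rfl⟩
    exact isGenSet_flipSigns hG hS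

end Recovery

theorem generator_sets_count (d n : ℕ) (Z : Set (EuclideanSpace ℝ (Fin d)))
    (G : Finset (EuclideanSpace ℝ (Fin d))) (hG : IsGenSet Z G) (hn : G.card = n) :
    {G' : Finset (EuclideanSpace ℝ (Fin d)) | IsGenSet Z G'}.ncard = 2 ^ n ∧
    (∀ G' : Finset (EuclideanSpace ℝ (Fin d)), IsGenSet Z G' →
      ∃ S ⊆ G, G' = (G \ S) ∪ S.image (fun g => -g)) ∧
    (∀ G' : Finset (EuclideanSpace ℝ (Fin d)), IsGenSet Z G' → G'.card = n) := by
  refine ⟨?_, fun G' hG' => ⟨G.filter fun g => -g ∈ G', Finset.filter_subset _ _,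
    hG.eq_flipSigns hG'⟩, fun G' hG' => ?_⟩
  · rw [hG.setOf_isGenSet_eq_image_flipSigns, Set.ncard_coe_finset,
      Finset.card_image_of_injOn (injOn_flipSigns hG.1), Finset.card_powerset, hn]
  · rw [hG.eq_flipSigns hG', card_flipSigns hG.1 (Finset.filter_subset _ _), hn]
end
end

section
/- For polytopes P, Q ⊂ R^3 and any nonzero vector u, the aggregated cone of the Minkowski sum satisfies C_{P+Q}(u) = C_P(u) ∪ C_Q(u). -/
open Pointwise
open scoped Classical

noncomputable section

/-!
Write `P = conv S` and `Q = conv T` with `S`, `T` finite. The faces of `conv S` are the hulls of the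
sets `maximizers S v` of maximizers of `⟪v, ·⟫` on `S`; the normal cone of such a face is
`maximizerCone S v`, and it is 2-dimensional and inside `uᗮ` exactly when it spans `uᗮ`.
Maximizers add under Minkowski sums, so the cones of `S + T` are the intersections of those of `S`
and `T`. Since `v` lies in the relative interior of its own cone (perturbing `v` within the span of
the cone does not change the maximizers), the span of an intersection is the intersection of the
spans. This gives `⊆`, because `uᗮ` is a coatom: if it is the meet of two spans containing it, it
equals one of them. For `⊇`, a cone of `S` through `w` is refined by the cone of `S + T` through
`w` of a minimal face, which has the same span.
-/

open Filter Topology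
open scoped RealInnerProductSpace

theorem eventually_add_mul_le_add_mul_iff (a b c d : ℝ) :
    ∀ᶠ t in 𝓝[>] (0 : ℝ), (a + t * b ≤ c + t * d ↔ a < c ∨ a = c ∧ b ≤ d) := by
  have hlim : ∀ p q : ℝ, Tendsto (fun t : ℝ => p + t * q) (𝓝[>] 0) (𝓝 p) := fun p q =>
    ((by fun_prop : Continuous fun t : ℝ => p + t * q).tendsto' 0 p (by simp)).mono_left
      nhdsWithin_le_nhds
  rcases lt_trichotomy a c with hac | rfl | hac
  · filter_upwards [(hlim a b).eventually_lt (hlim c d) hac] with t ht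
    simp [ht.le, hac]
  · filter_upwards [self_mem_nhdsWithin] with t (ht : 0 < t)
    simp [mul_le_mul_iff_right₀ ht]
  · filter_upwards [(hlim c d).eventually_lt (hlim a b) hac] with t ht
    simp [ht, hac.not_gt, hac.ne']

theorem Submodule.mem_span_of_add_smul_mem {𝕜 V : Type*} [DivisionRing 𝕜] [AddCommGroup V]
    [Module 𝕜 V] {s : Set V} {v x : V} {t : 𝕜} (ht : t ≠ 0) (hv : v ∈ s) (hvx : v + t • x ∈ s) :
    x ∈ Submodule.span 𝕜 s := by
  have hx : x = t⁻¹ • ((v + t • x) - v) := by rw [add_sub_cancel_left, inv_smul_smul₀ ht]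
  rw [hx]
  exact Submodule.smul_mem _ _ (Submodule.sub_mem _ (Submodule.subset_span hvx)
    (Submodule.subset_span hv))

theorem IsCoatom.eq_or_eq_of_inf_eq {α : Type*} [Lattice α] [OrderTop α] {a b c : α}
    (hc : IsCoatom c) (h : a ⊓ b = c) : a = c ∨ b = c := by
  rcases hc.le_iff.1 (h ▸ inf_le_left) with ha | ha
  · rcases hc.le_iff.1 (h ▸ inf_le_right) with hb | hb
    · exact absurd (by rw [← h, ha, hb, inf_top_eq]) hc.1
    · exact Or.inr hb
  · exact Or.inl ha

section Maximizers

variable {E : Type*} [NormedAddCommGroup E] [InnerProductSpace ℝ E]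

def maximizers (S : Finset E) (v : E) : Finset E :=
  S.filter fun s => ∀ t ∈ S, ⟪v, t⟫ ≤ ⟪v, s⟫

def maximizerCone (S : Finset E) (v : E) : Set E :=
  {w | maximizers S v ⊆ maximizers S w}

variable {S T A : Finset E} {s v w x y : E}

theorem mem_maximizers : s ∈ maximizers S v ↔ s ∈ S ∧ ∀ t ∈ S, ⟪v, t⟫ ≤ ⟪v, s⟫ :=
  Finset.mem_filter

theorem maximizers_subset : maximizers S v ⊆ S := Finset.filter_subset _ _

theorem maximizers_nonempty (hS : S.Nonempty) : (maximizers S v).Nonempty := by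
  obtain ⟨s, hs, hmax⟩ := S.exists_max_image (fun s => ⟪v, s⟫) hS
  exact ⟨s, mem_maximizers.2 ⟨hs, hmax⟩⟩

theorem mem_maximizers_of_subset (hAS : A ⊆ S) (hsA : s ∈ A) (hs : s ∈ maximizers S v) :
    s ∈ maximizers A v :=
  mem_maximizers.2 ⟨hsA, fun t ht => (mem_maximizers.1 hs).2 t (hAS ht)⟩

theorem mem_maximizerCone : w ∈ maximizerCone S v ↔ maximizers S v ⊆ maximizers S w := Iff.rfl

theorem self_mem_maximizerCone : v ∈ maximizerCone S v := Finset.Subset.refl _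

theorem mem_maximizers_maximizers_iff :
    s ∈ maximizers (maximizers S v) x ↔ s ∈ S ∧ ∀ t ∈ S,
      ⟪v, t⟫ < ⟪v, s⟫ ∨ ⟪v, t⟫ = ⟪v, s⟫ ∧ ⟪x, t⟫ ≤ ⟪x, s⟫ := by
  simp only [mem_maximizers]
  constructor
  · rintro ⟨⟨hs, hsv⟩, hsx⟩
    refine ⟨hs, fun t ht => (hsv t ht).lt_or_eq.imp_right fun heq => ⟨heq, hsx t ⟨ht, ?_⟩⟩⟩
    exact fun r hr => heq ▸ hsv r hr
  · rintro ⟨hs, hlex⟩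
    have hsv : ∀ t ∈ S, ⟪v, t⟫ ≤ ⟪v, s⟫ := fun t ht =>
      (hlex t ht).elim le_of_lt fun h => h.1.le
    refine ⟨⟨hs, hsv⟩, fun t ⟨ht, htv⟩ => ?_⟩
    exact ((hlex t ht).resolve_left (htv s hs).not_gt).2

theorem eventually_maximizers_add_smul (S : Finset E) (v x : E) :
    ∀ᶠ t in 𝓝[>] (0 : ℝ), maximizers S (v + t • x) = maximizers (maximizers S v) x := by
  have h : ∀ᶠ t in 𝓝[>] (0 : ℝ), ∀ s ∈ S, ∀ r ∈ S,
      (⟪v, r⟫ + t * ⟪x, r⟫ ≤ ⟪v, s⟫ + t * ⟪x, s⟫ ↔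
        ⟪v, r⟫ < ⟪v, s⟫ ∨ ⟪v, r⟫ = ⟪v, s⟫ ∧ ⟪x, r⟫ ≤ ⟪x, s⟫) := by
    simp only [eventually_all_finset]
    exact fun s _ r _ => eventually_add_mul_le_add_mul_iff _ _ _ _
  filter_upwards [h] with t ht
  ext s
  rw [mem_maximizers_maximizers_iff, mem_maximizers]
  simp only [inner_add_left, inner_smul_left, RCLike.conj_to_real]
  exact and_congr_right fun hs => forall₂_congr fun r hr => ht s hs r hr

theorem inner_eq_of_mem_maximizers {a b : E} (ha : a ∈ maximizers S v) (hb : b ∈ maximizers S v) :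
    ⟪v, a⟫ = ⟪v, b⟫ :=
  le_antisymm ((mem_maximizers.1 hb).2 a (maximizers_subset ha))
    ((mem_maximizers.1 ha).2 b (maximizers_subset hb))

theorem maximizerCone_subset (hw : w ∈ maximizerCone S v) :
    maximizerCone S w ⊆ maximizerCone S v :=
  fun _ hx => Finset.Subset.trans hw hx

theorem inner_eq_of_mem_span_maximizerCone (hy : y ∈ Submodule.span ℝ (maximizerCone S v))
    {a b : E} (ha : a ∈ maximizers S v) (hb : b ∈ maximizers S v) : ⟪y, a⟫ = ⟪y, b⟫ := by
  suffices y ∈ LinearMap.ker (innerₛₗ ℝ (a - b)) by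
    simpa [inner_sub_left, sub_eq_zero, real_inner_comm] using this
  refine Submodule.span_le.2 (fun w hw => ?_) hy
  simpa [inner_sub_left, sub_eq_zero, real_inner_comm] using
    inner_eq_of_mem_maximizers (hw ha) (hw hb)

theorem eventually_add_smul_mem_maximizerCone (hy : y ∈ Submodule.span ℝ (maximizerCone S v)) :
    ∀ᶠ t in 𝓝[>] (0 : ℝ), v + t • y ∈ maximizerCone S v := by
  filter_upwards [eventually_maximizers_add_smul S v y] with t ht s hs
  rw [ht]
  exact mem_maximizers.2 ⟨hs, fun r hr => (inner_eq_of_mem_span_maximizerCone hy hr hs).le⟩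

theorem mem_maximizers_add_iff [DecidableEq E] {s t : E} (hs : s ∈ S) (ht : t ∈ T) :
    s + t ∈ maximizers (S + T) v ↔ s ∈ maximizers S v ∧ t ∈ maximizers T v := by
  simp only [mem_maximizers]
  constructor
  · rintro ⟨-, h⟩
    refine ⟨⟨hs, fun r hr => ?_⟩, ⟨ht, fun r hr => ?_⟩⟩
    · simpa [inner_add_right] using h (r + t) (Finset.add_mem_add hr ht)
    · simpa [inner_add_right] using h (s + r) (Finset.add_mem_add hs hr)
  · rintro ⟨⟨-, hS⟩, ⟨-, hT⟩⟩
    refine ⟨Finset.add_mem_add hs ht, fun x hx => ?_⟩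
    obtain ⟨r, hr, q, hq, rfl⟩ := Finset.mem_add.1 hx
    simpa only [inner_add_right] using add_le_add (hS r hr) (hT q hq)

theorem maximizers_add [DecidableEq E] :
    maximizers (S + T) v = maximizers S v + maximizers T v := by
  ext x
  constructor
  · intro hx
    obtain ⟨s, hs, t, ht, rfl⟩ := Finset.mem_add.1 (maximizers_subset hx)
    obtain ⟨hsv, htv⟩ := (mem_maximizers_add_iff hs ht).1 hx
    exact Finset.add_mem_add hsv htv
  · intro hx
    obtain ⟨s, hs, t, ht, rfl⟩ := Finset.mem_add.1 hx
    exact (mem_maximizers_add_iff (maximizers_subset hs) (maximizers_subset ht)).2 ⟨hs, ht⟩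

theorem maximizerCone_add_subset_left [DecidableEq E] (hT : T.Nonempty) :
    maximizerCone (S + T) v ⊆ maximizerCone S v := by
  intro w hw s hs
  obtain ⟨t, ht⟩ := maximizers_nonempty (v := v) hT
  have hst : s + t ∈ maximizers (S + T) w :=
    hw ((mem_maximizers_add_iff (maximizers_subset hs) (maximizers_subset ht)).2 ⟨hs, ht⟩)
  exact ((mem_maximizers_add_iff (maximizers_subset hs) (maximizers_subset ht)).1 hst).1

theorem maximizerCone_add [DecidableEq E] (hS : S.Nonempty) (hT : T.Nonempty) :
    maximizerCone (S + T) v = maximizerCone S v ∩ maximizerCone T v := by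
  refine subset_antisymm (Set.subset_inter (maximizerCone_add_subset_left hT) ?_)
    fun w ⟨hwS, hwT⟩ => ?_
  · rw [add_comm]
    exact maximizerCone_add_subset_left hS
  · rw [mem_maximizerCone, maximizers_add, maximizers_add]
    exact Finset.add_subset_add hwS hwT

theorem span_maximizerCone_add [DecidableEq E] (hS : S.Nonempty) (hT : T.Nonempty) :
    Submodule.span ℝ (maximizerCone (S + T) v) =
      Submodule.span ℝ (maximizerCone S v) ⊓ Submodule.span ℝ (maximizerCone T v) := by
  rw [maximizerCone_add hS hT]
  refine le_antisymm (le_inf (Submodule.span_mono Set.inter_subset_left)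
    (Submodule.span_mono Set.inter_subset_right)) fun y ⟨hyS, hyT⟩ => ?_
  obtain ⟨t, ⟨htS, htT⟩, ht⟩ := ((eventually_add_smul_mem_maximizerCone hyS).and
    (eventually_add_smul_mem_maximizerCone hyT)).and self_mem_nhdsWithin |>.exists
  exact Submodule.mem_span_of_add_smul_mem (ne_of_gt ht)
    ⟨self_mem_maximizerCone, self_mem_maximizerCone⟩ ⟨htS, htT⟩

theorem exists_maximizerCone_add_span_eq [DecidableEq E] (hS : S.Nonempty) (hT : T.Nonempty)
    (hw : w ∈ maximizerCone S v) :
    ∃ v', w ∈ maximizerCone (S + T) v' ∧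
      Submodule.span ℝ (maximizerCone (S + T) v') = Submodule.span ℝ (maximizerCone S v) := by
  set A : Set E := {v' | v' ∈ maximizerCone S v ∧ w ∈ maximizerCone (S + T) v'}
  have hA : A.Nonempty := by
    obtain ⟨t, htS, htST⟩ := ((eventually_maximizers_add_smul S w v).and
      (eventually_maximizers_add_smul (S + T) w v)).exists
    refine ⟨w + t • v, fun s hs => ?_, ?_⟩
    · rw [htS]
      exact mem_maximizers_of_subset maximizers_subset (hw hs) hs
    · rw [mem_maximizerCone, htST]
      exact maximizers_subset
  -- Moving a face-minimizing `v'` towards any `x` in the cone of `S` keeps it in `A` and can only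
  -- shrink its face, so the face stays the same and `v' + t • x` lies in the cone of `v'`.
  obtain ⟨v', ⟨hv'S, hwv'⟩, hmin⟩ :=
    (measure fun v' => (maximizers (S + T) v').card).wf.has_min A hA
  refine ⟨v', hwv', le_antisymm (Submodule.span_mono fun y hy => ?_) (Submodule.span_le.2 ?_)⟩
  · rw [maximizerCone_add hS hT] at hy
    exact maximizerCone_subset hv'S hy.1
  intro x hx
  obtain ⟨t, ⟨htS, htST⟩, ht⟩ := ((eventually_maximizers_add_smul S v' x).and
    (eventually_maximizers_add_smul (S + T) v' x)).and self_mem_nhdsWithin |>.exists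
  have hsub : maximizers (S + T) (v' + t • x) ⊆ maximizers (S + T) v' :=
    htST ▸ maximizers_subset
  have hmem : v' + t • x ∈ A := by
    refine ⟨fun s hs => ?_, Finset.Subset.trans hsub hwv'⟩
    rw [htS]
    exact mem_maximizers_of_subset maximizers_subset (hv'S hs) (hx hs)
  have heq : maximizers (S + T) (v' + t • x) = maximizers (S + T) v' :=
    Finset.eq_of_subset_of_card_le hsub (not_lt.1 (hmin _ hmem))
  exact Submodule.mem_span_of_add_smul_mem (ne_of_gt ht) self_mem_maximizerCone
    (mem_maximizerCone.2 heq.ge)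

end Maximizers

section Polytope

variable {E : Type*} [NormedAddCommGroup E] [InnerProductSpace ℝ E]

theorem isCoatom_orthogonal_span_singleton {u : E} (hu : u ≠ 0) : IsCoatom (ℝ ∙ u)ᗮ := by
  have hker : (ℝ ∙ u)ᗮ = LinearMap.ker (innerₛₗ ℝ u) := by
    ext x
    simp [Submodule.mem_orthogonal_singleton_iff_inner_right]
  rw [hker]
  refine LinearMap.isCoatom_ker_of_surjective fun c => ⟨(c / ⟪u, u⟫) • u, ?_⟩
  rw [innerₛₗ_apply_apply, real_inner_smul_right, div_mul_cancel₀ c (inner_self_ne_zero.2 hu)]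

theorem exists_inner_ge_of_mem_convexHull {s : Set E} {x : E} (v : E) (hx : x ∈ convexHull ℝ s) :
    ∃ y ∈ s, ⟪v, x⟫ ≤ ⟪v, y⟫ :=
  ((innerₛₗ ℝ v).convexOn convex_univ).exists_ge_of_mem_convexHull (Set.subset_univ _) hx

theorem exists_inner_le_of_mem_convexHull {s : Set E} {x : E} (v : E) (hx : x ∈ convexHull ℝ s) :
    ∃ y ∈ s, ⟪v, y⟫ ≤ ⟪v, x⟫ :=
  ((innerₛₗ ℝ v).concaveOn convex_univ).exists_le_of_mem_convexHull (Set.subset_univ _) hx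

/-- By Krein–Milman, an exposed face of a polytope is the hull of its extreme points, and these
are vertices. -/
theorem toExposed_convexHull (S : Finset E) (v : E) :
    (innerSL ℝ v).toExposed (convexHull ℝ (S : Set E)) = convexHull ℝ (maximizers S v : Set E) := by
  set F := (innerSL ℝ v).toExposed (convexHull ℝ (S : Set E))
  have hF : IsExposed ℝ (convexHull ℝ (S : Set E)) F := ContinuousLinearMap.toExposed.isExposed
  have hFconv : Convex ℝ F := hF.convex (convex_convexHull ℝ _)
  have hmax : (maximizers S v : Set E) ⊆ F := fun s hs => by
    refine ⟨subset_convexHull ℝ _ (maximizers_subset hs), fun y hy => ?_⟩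
    obtain ⟨r, hr, hyr⟩ := exists_inner_ge_of_mem_convexHull v hy
    simpa using hyr.trans ((mem_maximizers.1 hs).2 r hr)
  refine subset_antisymm ?_ (convexHull_min hmax hFconv)
  have hext : F.extremePoints ℝ ⊆ maximizers S v := fun x hx => by
    have hxS : x ∈ S := extremePoints_convexHull_subset (𝕜 := ℝ)
      (hF.isExtreme.extremePoints_subset_extremePoints hx)
    have hxF : x ∈ F := extremePoints_subset (𝕜 := ℝ) hx
    exact mem_maximizers.2 ⟨hxS, fun t ht => by simpa using hxF.2 t (subset_convexHull ℝ _ ht)⟩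
  calc F = closure (convexHull ℝ (F.extremePoints ℝ)) :=
        (closure_convexHull_extremePoints
          (hF.isCompact (S.finite_toSet.isCompact_convexHull ℝ)) hFconv).symm
    _ ⊆ closure (convexHull ℝ (maximizers S v : Set E)) := closure_mono (convexHull_mono hext)
    _ = convexHull ℝ (maximizers S v : Set E) :=
        ((maximizers S v).finite_toSet.isCompact_convexHull ℝ).isClosed.closure_eq

theorem isFace_convexHull_iff [CompleteSpace E] {S : Finset E} (hS : S.Nonempty) {F : Set E} :
    IsFace (convexHull ℝ (S : Set E)) F ↔ ∃ v, F = convexHull ℝ (maximizers S v : Set E) := by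
  constructor
  · rintro ⟨hne, hexp⟩
    obtain ⟨l, rfl⟩ := hexp hne
    refine ⟨(InnerProductSpace.toDual ℝ E).symm l, ?_⟩
    rw [← toExposed_convexHull]
    congr
    ext
    simp
  · rintro ⟨v, rfl⟩
    refine ⟨(Finset.coe_nonempty.2 (maximizers_nonempty hS)).convexHull, ?_⟩
    rw [← toExposed_convexHull]
    exact ContinuousLinearMap.toExposed.isExposed

end Polytope

theorem normalCone_convexHull_maximizers (S : Finset E3) (v : E3) :
    normalCone (convexHull ℝ (S : Set E3)) (convexHull ℝ (maximizers S v : Set E3)) =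
      maximizerCone S v := by
  ext w
  constructor
  · intro h s hs
    exact mem_maximizers.2 ⟨maximizers_subset hs, fun t ht =>
      h t (subset_convexHull ℝ _ ht) s (subset_convexHull ℝ _ hs)⟩
  · intro h x hx y hy
    obtain ⟨r, hr, hxr⟩ := exists_inner_ge_of_mem_convexHull w hx
    obtain ⟨q, hq, hqy⟩ := exists_inner_le_of_mem_convexHull w hy
    exact (hxr.trans ((mem_maximizers.1 (h hq)).2 r hr)).trans hqy

theorem span_eq_orthogonal_span_singleton_iff {u : E3} (hu : u ≠ 0) {A : Set E3} :
    Submodule.span ℝ A = (ℝ ∙ u)ᗮ ↔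
      Module.finrank ℝ (Submodule.span ℝ A) = 2 ∧ A ⊆ ((ℝ ∙ u)ᗮ : Set E3) := by
  have : Fact (Module.finrank ℝ E3 = 2 + 1) := ⟨by simp⟩
  have hrank : Module.finrank ℝ (ℝ ∙ u)ᗮ = 2 := Submodule.finrank_orthogonal_span_singleton hu
  constructor
  · intro h
    exact ⟨h ▸ hrank, h ▸ Submodule.subset_span⟩
  · rintro ⟨hdim, hsub⟩
    exact Submodule.eq_of_le_of_finrank_eq (Submodule.span_le.2 hsub) (hdim.trans hrank.symm)

theorem mem_aggCone_convexHull_iff {S : Finset E3} (hS : S.Nonempty) {u : E3} (hu : u ≠ 0)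
    {w : E3} : w ∈ aggCone (convexHull ℝ (S : Set E3)) u ↔
      ∃ v, w ∈ maximizerCone S v ∧ Submodule.span ℝ (maximizerCone S v) = (ℝ ∙ u)ᗮ := by
  simp only [aggCone, Set.mem_iUnion, exists_prop, Set.mem_ofPred_eq]
  constructor
  · rintro ⟨F, ⟨hF, hdim, hsub⟩, hwF⟩
    obtain ⟨v, rfl⟩ := (isFace_convexHull_iff hS).1 hF
    rw [normalCone_convexHull_maximizers] at hdim hsub hwF
    exact ⟨v, hwF, (span_eq_orthogonal_span_singleton_iff hu).2 ⟨hdim, hsub⟩⟩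
  · rintro ⟨v, hw, hspan⟩
    refine ⟨_, ⟨(isFace_convexHull_iff hS).2 ⟨v, rfl⟩, ?_⟩, ?_⟩ <;>
      rw [normalCone_convexHull_maximizers]
    exacts [(span_eq_orthogonal_span_singleton_iff hu).1 hspan, hw]

theorem aggCone_minkowski_sum (P Q : Set E3) (hP : IsPolytope P) (hQ : IsPolytope Q)
    (u : E3) (hu : u ≠ 0) :
    aggCone (P + Q) u = aggCone P u ∪ aggCone Q u := by
  obtain ⟨S, hS, rfl⟩ := hP
  obtain ⟨T, hT, rfl⟩ := hQ
  rw [← convexHull_add, ← Finset.coe_add]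
  ext w
  simp only [Set.mem_union, mem_aggCone_convexHull_iff hS hu, mem_aggCone_convexHull_iff hT hu,
    mem_aggCone_convexHull_iff (hS.add hT) hu]
  constructor
  · rintro ⟨v, hw, hspan⟩
    rw [maximizerCone_add hS hT] at hw
    rw [span_maximizerCone_add hS hT] at hspan
    exact ((isCoatom_orthogonal_span_singleton hu).eq_or_eq_of_inf_eq hspan).imp
      (fun h => ⟨v, hw.1, h⟩) (fun h => ⟨v, hw.2, h⟩)
  · rintro (⟨v, hw, hspan⟩ | ⟨v, hw, hspan⟩)
    · obtain ⟨v', hw', hspan'⟩ := exists_maximizerCone_add_span_eq hS hT hw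
      exact ⟨v', hw', hspan'.trans hspan⟩
    · obtain ⟨v', hw', hspan'⟩ := exists_maximizerCone_add_span_eq hT hS hw
      rw [add_comm] at hw' hspan'
      exact ⟨v', hw', hspan'.trans hspan⟩
end
end
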